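/- Let m,n ∈ ℤ with 3 ∣ m+n. Then for every x ∈ ℝ² and every p ∈ ℤ: V_{m,n}(R₁x) = −V_{m,n}(x), V_{m,n}(R₂x) = −V_{m,n}(x), and V_{m,n}(x + p·(e+ω)) = V_{m,n}(x), where R₁(x,y) = (x,−y), R₂(x,y) = ((−x + √3·y)/2, (√3·x + y)/2), e = (1,0) and ω = (1/2, √3/2). (Equivalently, V_{m,n}(gx + p(e+ω)) = ε(g)·V_{m,n}(x) for every g in the group generated by R₁ and R₂, where ε is the homomorphism sending R₁ and R₂ to −1.) -/

import Mathlib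

/-!
Each `e_{m,n}` is a character of `ℝ²`. Composing with `R₁` or `R₂` sends `e_{m,n}` to another
exponential, `e_{m,m-n}` resp. `e_{n-m,n}`, and on the six frequencies of `V_{m,n}` these maps
are products of three transpositions, pairing terms of opposite sign; hence `V_{m,n}` changes sign.
Since `k_{a,b} · (e + ω) = 2π(a + b)/3` and every index pair `(a, b)` of `V_{m,n}` has
`a + b ≡ ±(m + n) mod 3`, every term of `V_{m,n}` is periodic under `e + ω` when `3 ∣ m + n`.
-/

noncomputable section

/-- The frequency vector `k_{m,n}`. -/
def kvec (m n : ℤ) : ℝ × ℝ :=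
  (2 * Real.pi / 3 * m, 2 * Real.pi / 3 * ((2 * (n : ℝ) - m) / Real.sqrt 3))

/-- The exponential `e_{m,n}(x) = exp(i k_{m,n} · x)`. -/
def efun (m n : ℤ) (x : ℝ × ℝ) : ℂ :=
  Complex.exp (Complex.I * ((((kvec m n).1 * x.1 + (kvec m n).2 * x.2 : ℝ)) : ℂ))

/-- The Dirichlet trigonometric eigenfunction `V_{m,n}`. -/
def Vfun (m n : ℤ) (x : ℝ × ℝ) : ℂ :=
  efun m n x - efun m (m - n) x + efun (-n) (m - n) x - efun (-n) (-m) x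
    + efun (n - m) (-m) x - efun (n - m) n x

/-- Reflection across the `x`-axis. -/
def R₁ (p : ℝ × ℝ) : ℝ × ℝ := (p.1, -p.2)

/-- Reflection across the line spanned by `(1/2, √3/2)`. -/
def R₂ (p : ℝ × ℝ) : ℝ × ℝ :=
  ((-p.1 + Real.sqrt 3 * p.2) / 2, (Real.sqrt 3 * p.1 + p.2) / 2)

/-- The vector `e = (1,0)`. -/
def evec : ℝ × ℝ := (1, 0)

/-- The vector `ω = (1/2, √3/2)`. -/
def ωvec : ℝ × ℝ := (1 / 2, Real.sqrt 3 / 2)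

lemma efun_add (m n : ℤ) (x y : ℝ × ℝ) : efun m n (x + y) = efun m n x * efun m n y := by
  simp only [efun, ← Complex.exp_add, Prod.fst_add, Prod.snd_add]
  push_cast
  ring_nf

lemma efun_zsmul (m n : ℤ) (p : ℤ) (y : ℝ × ℝ) : efun m n ((p : ℝ) • y) = efun m n y ^ p := by
  simp only [efun, ← Complex.exp_int_mul, Prod.smul_fst, Prod.smul_snd, smul_eq_mul]
  push_cast
  ring_nf

lemma efun_evec_add_ωvec (m n : ℤ) :
    efun m n (evec + ωvec) = Complex.exp (2 * Real.pi * Complex.I * ((m + n : ℤ) / 3 : ℂ)) := by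
  have hs : Real.sqrt 3 ≠ 0 := by positivity
  have hphase : (kvec m n).1 * (evec + ωvec).1 + (kvec m n).2 * (evec + ωvec).2
      = 2 * Real.pi * ((m + n : ℤ) / 3 : ℝ) := by
    simp only [kvec, evec, ωvec, Prod.fst_add, Prod.snd_add]
    field_simp
    push_cast
    ring
  rw [efun, hphase]
  push_cast
  ring_nf

lemma efun_evec_add_ωvec_of_dvd {m n : ℤ} (h : (3 : ℤ) ∣ m + n) : efun m n (evec + ωvec) = 1 := by
  obtain ⟨k, hk⟩ := h
  rw [efun_evec_add_ωvec, hk]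
  push_cast
  rw [mul_div_cancel_left₀ _ three_ne_zero, mul_comm, Complex.exp_int_mul_two_pi_mul_I]

lemma efun_add_zsmul_of_dvd {m n : ℤ} (h : (3 : ℤ) ∣ m + n) (x : ℝ × ℝ) (p : ℤ) :
    efun m n (x + (p : ℝ) • (evec + ωvec)) = efun m n x := by
  rw [efun_add, efun_zsmul, efun_evec_add_ωvec_of_dvd h, one_zpow, mul_one]

lemma efun_R₁ (m n : ℤ) (x : ℝ × ℝ) : efun m n (R₁ x) = efun m (m - n) x := by
  have hphase : (kvec m n).1 * (R₁ x).1 + (kvec m n).2 * (R₁ x).2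
      = (kvec m (m - n)).1 * x.1 + (kvec m (m - n)).2 * x.2 := by
    simp only [kvec, R₁]
    push_cast
    ring
  rw [efun, hphase, efun]

lemma efun_R₂ (m n : ℤ) (x : ℝ × ℝ) : efun m n (R₂ x) = efun (n - m) n x := by
  have hs : Real.sqrt 3 ^ 2 = 3 := Real.sq_sqrt (by norm_num)
  have hphase : (kvec m n).1 * (R₂ x).1 + (kvec m n).2 * (R₂ x).2
      = (kvec (n - m) n).1 * x.1 + (kvec (n - m) n).2 * x.2 := by
    simp only [kvec, R₂]
    push_cast
    field_simp
    linear_combination ((m : ℝ) * x.2) * hs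
  rw [efun, hphase, efun]

lemma Vfun_R₁ (m n : ℤ) (x : ℝ × ℝ) : Vfun m n (R₁ x) = -Vfun m n x := by
  simp only [Vfun, efun_R₁, sub_sub_cancel, show -n - (m - n) = -m by ring,
    show -n - -m = m - n by ring, show n - m - -m = n by ring, show n - m - n = -m by ring]
  ring

lemma Vfun_R₂ (m n : ℤ) (x : ℝ × ℝ) : Vfun m n (R₂ x) = -Vfun m n x := by
  simp only [Vfun, efun_R₂, sub_sub_cancel_left, sub_sub_cancel, show m - n - -n = m by ring,
    show -m - -n = n - m by ring, show -m - (n - m) = -n by ring]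
  ring

lemma Vfun_add_zsmul_of_dvd {m n : ℤ} (h : (3 : ℤ) ∣ m + n) (x : ℝ × ℝ) (p : ℤ) :
    Vfun m n (x + (p : ℝ) • (evec + ωvec)) = Vfun m n x := by
  simp only [Vfun, efun_add_zsmul_of_dvd h, efun_add_zsmul_of_dvd (m := m) (n := m - n) (by omega),
    efun_add_zsmul_of_dvd (m := -n) (n := m - n) (by omega),
    efun_add_zsmul_of_dvd (m := -n) (n := -m) (by omega),
    efun_add_zsmul_of_dvd (m := n - m) (n := -m) (by omega),
    efun_add_zsmul_of_dvd (m := n - m) (n := n) (by omega)]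

theorem Vfun_invariance (m n : ℤ) (hmn : (3 : ℤ) ∣ m + n) (x : ℝ × ℝ) (p : ℤ) :
    Vfun m n (R₁ x) = -Vfun m n x ∧ Vfun m n (R₂ x) = -Vfun m n x ∧
      Vfun m n (x + (p : ℝ) • (evec + ωvec)) = Vfun m n x :=
  ⟨Vfun_R₁ m n x, Vfun_R₂ m n x, Vfun_add_zsmul_of_dvd hmn x p⟩

end
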